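/- arXiv:1206.4572 — 3 statements merged into one kernel-verified Lean document; each statement's English description precedes it below -/
import Mathlib

section
/- Let a be a binary sequence of length n with γ runs. Then for every k with 0 ≤ k ≤ n, C_k(a) = (−1)^{γ+1}·(n−k) − 2·Σ_{j=k+1}^{n−1} (j−k)·R_j(a). -/
/-- The `k`-th aperiodic autocorrelation of a sequence `a` of length `n`:
`C_k(a) = ∑_{i=1}^{n-k} a_i a_{i+k}` (so `C_n(a) = 0`). -/
def aperCorr (a : ℕ → ℤ) (n k : ℕ) : ℤ :=
  ∑ i ∈ Finset.Icc 1 (n - k), a i * a (i + k)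

/-- The number of runs of the sequence `a` of length `n` (with `a 0 = 0`). -/
def numRuns (a : ℕ → ℤ) (n : ℕ) : ℕ :=
  ((Finset.Icc 1 n).filter (fun i => a i ≠ a (i - 1))).card

/-- The `k`-th component of the run vector of the sequence `a` of length `n`
(with `a 0 = 0` and `a (n+1) = 0`): minus the sum of the weights of all run
blocks `a(i, i+k)` of `a` of length `k`. -/
def runVec (a : ℕ → ℤ) (n k : ℕ) : ℤ :=
  -∑ i ∈ Finset.Icc 1 (n + 1 - k),
    (if a (i - 1) ≠ a i ∧ a (i + k - 1) ≠ a (i + k) then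
      (if 1 < i ∧ i + k < n + 1 then 2 else 1) * (a i * a (i + k - 1))
    else 0)

/-!
Extend `a` by `a₀ = aₙ₊₁ = 0` and let `dⱼ = aⱼ - aⱼ₊₁` be its jump sequence, which is nonzero
exactly at the run boundaries. The second difference `C_l - 2 C_{l+1} + C_{l+2}` is minus the
correlation `∑ⱼ dⱼ dⱼ₊ₗ₊₁` of the jumps, and a pair of boundaries at distance `l + 1` is precisely
a run block of that length, with `dⱼ dⱼ₊ₗ₊₁ = -2 w` for its weight `w`. Summing the second
differences twice down from `C_n = 0` and `C_{n-1} = a₁ aₙ = (-1)^(γ+1)` gives the formula.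
-/

open Finset

section SecondDifferences

variable {R : Type*} [CommRing R]

theorem sub_succ_eq_add_sum_Ico_of_sub_two_mul_add_eq {g r : ℕ → R} {n : ℕ} (hgn : g n = 0)
    (hg : ∀ l, l + 2 ≤ n → g l - 2 * g (l + 1) + g (l + 2) = r (l + 1)) {l : ℕ} (hl : l < n) :
    g l - g (l + 1) = g (n - 1) + ∑ j ∈ Ico (l + 1) n, r j := by
  have hsecond : ∀ i ∈ Ico l (n - 1), g (i + 1) - g (i + 1 + 1) - (g i - g (i + 1)) = -r (i + 1) :=
    fun i hi => by
      have := hg i (by simp at hi; omega)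
      linear_combination -this
  have htel := sum_Ico_sub (fun i => g i - g (i + 1)) (show l ≤ n - 1 by omega)
  rw [sum_congr rfl hsecond, sum_neg_distrib, sum_Ico_add' r, Nat.sub_add_cancel (by omega),
    hgn] at htel
  linear_combination htel

theorem sum_Ico_sum_Ico_succ_eq_sum_Icc_mul (r : ℕ → R) (k n : ℕ) :
    ∑ i ∈ Ico k n, ∑ j ∈ Ico (i + 1) n, r j = ∑ j ∈ Icc (k + 1) (n - 1), ((j : R) - k) * r j := by
  rw [sum_Ico_Ico_comm', sum_congr rfl fun j hj => by
    rw [sum_const, Nat.card_Ico, nsmul_eq_mul, Nat.cast_sub (by simp at hj; omega)]]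
  symm
  apply sum_subset
  · intro j hj
    simp at hj ⊢
    omega
  · intro j hj hj'
    obtain rfl : j = k := by simp at hj hj'; omega
    simp

theorem eq_mul_add_sum_of_sub_two_mul_add_eq {g r : ℕ → R} {n : ℕ} (hgn : g n = 0)
    (hg : ∀ l, l + 2 ≤ n → g l - 2 * g (l + 1) + g (l + 2) = r (l + 1)) {k : ℕ} (hk : k ≤ n) :
    g k = g (n - 1) * (n - k) + ∑ j ∈ Icc (k + 1) (n - 1), ((j : R) - k) * r j := by
  calc g k = ∑ l ∈ Ico k n, (g l - g (l + 1)) := by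
        rw [← neg_inj, ← sum_neg_distrib]
        simp_rw [neg_sub]
        rw [sum_Ico_sub g hk, hgn, zero_sub]
    _ = ∑ l ∈ Ico k n, (g (n - 1) + ∑ j ∈ Ico (l + 1) n, r j) :=
        sum_congr rfl fun l hl =>
          sub_succ_eq_add_sum_Ico_of_sub_two_mul_add_eq hgn hg (by simp at hl; omega)
    _ = _ := by
        rw [sum_add_distrib, sum_const, Nat.card_Ico, nsmul_eq_mul, Nat.cast_sub hk, mul_comm,
          sum_Ico_sum_Ico_succ_eq_sum_Icc_mul]

end SecondDifferences

theorem sum_Icc_one_eq_sum_range {M : Type*} [AddCommMonoid M] (f : ℕ → M) (m : ℕ) :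
    ∑ i ∈ Icc 1 m, f i = ∑ j ∈ range m, f (j + 1) := by
  rw [range_eq_Ico, sum_Ico_add', ← Ico_add_one_right_eq_Icc, zero_add]

section Correlation

variable {a : ℕ → ℤ} {n : ℕ}

variable (a n) in
theorem aperCorr_self : aperCorr a n n = 0 := by
  simp [aperCorr]

theorem aperCorr_sub_one (hn : 1 ≤ n) : aperCorr a n (n - 1) = a 1 * a n := by
  rw [aperCorr, show n - (n - 1) = 1 by omega, Icc_self, sum_singleton,
    show 1 + (n - 1) = n by omega]

theorem sum_range_mul_eq_aperCorr (h0 : a 0 = 0) (htop : a (n + 1) = 0) {k m : ℕ}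
    (hm : n - k ≤ m) (hmk : m + k ≤ n + 1) :
    ∑ j ∈ range (m + 1), a j * a (j + k) = aperCorr a n k := by
  rw [sum_range_succ', h0, zero_mul, add_zero, aperCorr, sum_Icc_one_eq_sum_range]
  obtain rfl | rfl : m = n - k ∨ m = n - k + 1 := by omega
  · rfl
  · rw [sum_range_succ, show n - k + 1 + k = n + 1 by omega, htop, mul_zero, add_zero]

theorem aperCorr_sub_two_mul_add_eq_sum (h0 : a 0 = 0) (htop : a (n + 1) = 0) {l : ℕ}
    (hl : l < n) :
    aperCorr a n l - 2 * aperCorr a n (l + 1) + aperCorr a n (l + 2)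
      = -∑ j ∈ range (n - l), (a j - a (j + 1)) * (a (j + (l + 1)) - a (j + (l + 1) + 1)) := by
  obtain ⟨m, hm⟩ : ∃ m, n - l = m + 1 := ⟨n - l - 1, by omega⟩
  have e1 := sum_range_mul_eq_aperCorr h0 htop (k := l + 1) (m := m) (by omega) (by omega)
  have e2 := sum_range_mul_eq_aperCorr h0 htop (k := l + 2) (m := m) (by omega) (by omega)
  have e3 := sum_range_mul_eq_aperCorr h0 htop (k := l) (m := m + 1) (by omega) (by omega)
  have e4 := sum_range_mul_eq_aperCorr h0 htop (k := l + 1) (m := m + 1) (by omega) (by omega)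
  rw [sum_range_succ', h0, zero_mul, add_zero] at e3 e4
  have hexpand :
      ∑ j ∈ range (m + 1), (a j - a (j + 1)) * (a (j + (l + 1)) - a (j + (l + 1) + 1))
        = ∑ j ∈ range (m + 1), a j * a (j + (l + 1)) - ∑ j ∈ range (m + 1), a j * a (j + (l + 2))
          - ∑ j ∈ range (m + 1), a (j + 1) * a (j + 1 + l)
          + ∑ j ∈ range (m + 1), a (j + 1) * a (j + 1 + (l + 1)) := by
    rw [← sum_sub_distrib, ← sum_sub_distrib, ← sum_add_distrib]
    exact sum_congr rfl fun j _ => by ring_nf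
  rw [hm, hexpand]
  linear_combination e1 - e2 - e3 + e4

end Correlation

theorem sub_mul_sub_eq_neg_two_mul_ite {x y u v : ℤ} (hx : x = 0 ∨ x = 1 ∨ x = -1)
    (hy : y = 1 ∨ y = -1) (hu : u = 1 ∨ u = -1) (hv : v = 0 ∨ v = 1 ∨ v = -1)
    (hxv : x ≠ 0 ∨ v ≠ 0) :
    (x - y) * (u - v)
      = -2 * (if x ≠ y ∧ u ≠ v then (if x ≠ 0 ∧ v ≠ 0 then 2 else 1) * (y * u) else 0) := by
  rcases hx with rfl | rfl | rfl <;> rcases hy with rfl | rfl <;> rcases hu with rfl | rfl <;>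
    rcases hv with rfl | rfl | rfl <;> simp at hxv ⊢

theorem mul_eq_ite_ne {x y : ℤ} (hx : x = 1 ∨ x = -1) (hy : y = 1 ∨ y = -1) :
    x * y = if y ≠ x then -1 else 1 := by
  rcases hx with rfl | rfl <;> rcases hy with rfl | rfl <;> simp

section Runs

variable {a : ℕ → ℤ} {n : ℕ}

theorem apply_ne_zero_iff_of_le_succ (hbin : ∀ i, 1 ≤ i → i ≤ n → a i = 1 ∨ a i = -1)
    (h0 : a 0 = 0) (htop : a (n + 1) = 0) {j : ℕ} (hj : j ≤ n + 1) :
    a j ≠ 0 ↔ 1 ≤ j ∧ j ≤ n := by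
  obtain rfl | rfl | hj' : j = 0 ∨ j = n + 1 ∨ (1 ≤ j ∧ j ≤ n) := by omega
  · simp [h0]
  · simp [htop]
  · rcases hbin j hj'.1 hj'.2 with h | h <;> simp [h, hj']

theorem apply_eq_zero_or_eq_one_or_eq_neg_one_of_le_succ
    (hbin : ∀ i, 1 ≤ i → i ≤ n → a i = 1 ∨ a i = -1) (h0 : a 0 = 0) (htop : a (n + 1) = 0)
    {j : ℕ} (hj : j ≤ n + 1) : a j = 0 ∨ a j = 1 ∨ a j = -1 := by
  by_cases h : a j = 0
  · exact .inl h
  · rw [← Ne, apply_ne_zero_iff_of_le_succ hbin h0 htop hj] at h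
    exact .inr (hbin j h.1 h.2)

theorem sub_mul_sub_eq_neg_two_mul_runVec_term
    (hbin : ∀ i, 1 ≤ i → i ≤ n → a i = 1 ∨ a i = -1) (h0 : a 0 = 0) (htop : a (n + 1) = 0)
    {i k : ℕ} (hi : 1 ≤ i) (hik : i + k ≤ n + 1) (hk : 1 ≤ k) (hkn : k < n) :
    (a (i - 1) - a i) * (a (i + k - 1) - a (i + k))
      = -2 * (if a (i - 1) ≠ a i ∧ a (i + k - 1) ≠ a (i + k) then
          (if 1 < i ∧ i + k < n + 1 then 2 else 1) * (a i * a (i + k - 1)) else 0) := by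
  have hleft := apply_ne_zero_iff_of_le_succ hbin h0 htop (j := i - 1) (by omega)
  have hright := apply_ne_zero_iff_of_le_succ hbin h0 htop (j := i + k) hik
  have hinner : (1 < i ∧ i + k < n + 1) ↔ (a (i - 1) ≠ 0 ∧ a (i + k) ≠ 0) := by
    rw [hleft, hright]
    omega
  simp only [hinner]
  exact sub_mul_sub_eq_neg_two_mul_ite
    (apply_eq_zero_or_eq_one_or_eq_neg_one_of_le_succ hbin h0 htop (by omega))
    (hbin i hi (by omega)) (hbin (i + k - 1) (by omega) (by omega))
    (apply_eq_zero_or_eq_one_or_eq_neg_one_of_le_succ hbin h0 htop hik)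
    (by rw [hleft, hright]; omega)

theorem sum_sub_mul_sub_eq_two_mul_runVec
    (hbin : ∀ i, 1 ≤ i → i ≤ n → a i = 1 ∨ a i = -1) (h0 : a 0 = 0) (htop : a (n + 1) = 0)
    {k : ℕ} (hk : 1 ≤ k) (hkn : k < n) :
    ∑ j ∈ range (n + 1 - k), (a j - a (j + 1)) * (a (j + k) - a (j + k + 1))
      = 2 * runVec a n k := by
  rw [runVec, sum_Icc_one_eq_sum_range, mul_neg, mul_sum, ← sum_neg_distrib]
  refine sum_congr rfl fun j hj => ?_
  have := sub_mul_sub_eq_neg_two_mul_runVec_term hbin h0 htop (i := j + 1) (by omega)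
    (by simp at hj; omega) hk hkn
  rw [show j + 1 - 1 = j by omega, show j + 1 + k - 1 = j + k by omega,
    show j + 1 + k = j + k + 1 by omega] at this ⊢
  linear_combination this

theorem aperCorr_sub_two_mul_add_eq_neg_two_mul_runVec
    (hbin : ∀ i, 1 ≤ i → i ≤ n → a i = 1 ∨ a i = -1) (h0 : a 0 = 0) (htop : a (n + 1) = 0)
    {l : ℕ} (hl : l + 2 ≤ n) :
    aperCorr a n l - 2 * aperCorr a n (l + 1) + aperCorr a n (l + 2)
      = -2 * runVec a n (l + 1) := by
  rw [aperCorr_sub_two_mul_add_eq_sum h0 htop (by omega), ← Nat.add_sub_add_right n 1 l,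
    sum_sub_mul_sub_eq_two_mul_runVec hbin h0 htop (by omega) (by omega)]
  ring

theorem first_mul_eq_neg_prod_Icc (hbin : ∀ i, 1 ≤ i → i ≤ n → a i = 1 ∨ a i = -1)
    (h0 : a 0 = 0) {m : ℕ} (hm : 1 ≤ m) (hmn : m ≤ n) :
    a 1 * a m = -∏ i ∈ Icc 1 m, (if a i ≠ a (i - 1) then -1 else 1) := by
  induction m, hm using Nat.le_induction with
  | base => rcases hbin 1 le_rfl hmn with h | h <;> simp [h, h0]
  | succ m hm ih =>
    have ham := hbin m hm (by omega)
    have hsq : a m * a m = 1 := by rcases ham with h | h <;> simp [h]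
    calc a 1 * a (m + 1) = (a 1 * a m) * (a m * a (m + 1)) := by
          linear_combination (-a 1 * a (m + 1)) * hsq
      _ = _ := by
          rw [ih (by omega), mul_eq_ite_ne ham (hbin (m + 1) (by omega) hmn),
            prod_Icc_succ_top (by omega), Nat.add_sub_cancel]
          ring

theorem first_mul_last_eq_neg_one_pow_numRuns (hbin : ∀ i, 1 ≤ i → i ≤ n → a i = 1 ∨ a i = -1)
    (h0 : a 0 = 0) (hn : 1 ≤ n) : a 1 * a n = (-1) ^ (numRuns a n + 1) := by
  rw [first_mul_eq_neg_prod_Icc hbin h0 hn le_rfl, pow_succ, numRuns, ← prod_const, prod_filter]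
  ring

end Runs

theorem stmt_7 (n : ℕ) (hn : 1 ≤ n) (a : ℕ → ℤ)
    (hbin : ∀ i, 1 ≤ i → i ≤ n → a i = 1 ∨ a i = -1)
    (h0 : a 0 = 0) (htop : a (n + 1) = 0)
    (k : ℕ) (hk : k ≤ n) :
    aperCorr a n k = (-1 : ℤ) ^ (numRuns a n + 1) * ((n : ℤ) - k)
      - 2 * ∑ j ∈ Finset.Icc (k + 1) (n - 1), ((j : ℤ) - k) * runVec a n j := by
  rw [eq_mul_add_sum_of_sub_two_mul_add_eq (r := fun j => -2 * runVec a n j) (aperCorr_self a n)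
      (fun l hl => aperCorr_sub_two_mul_add_eq_neg_two_mul_runVec hbin h0 htop hl) hk,
    aperCorr_sub_one hn, first_mul_last_eq_neg_one_pow_numRuns hbin h0 hn, mul_sum,
    sub_eq_add_neg (_ * _), ← sum_neg_distrib]
  congr 1
  exact sum_congr rfl fun j _ => by ring
end

section
/- Let a be a binary sequence of length n, let m > 1, and let b be the binary sequence of length n·m obtained by repeating each element of a exactly m times, i.e. b_{(i−1)m+t} = a_i for 1 ≤ i ≤ n and 1 ≤ t ≤ m. Then for all k and s with 0 ≤ k < n and 0 ≤ s < m, C_{km+s}(b) = (m−s)·C_k(a) + s·C_{k+1}(a), where C_n(a) := 0. -/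
open Finset

lemma sum_range_mul_eq_sum_sum {M : Type*} [AddCommMonoid M] (f : ℕ → M) (N m : ℕ) :
    ∑ j ∈ range (N * m), f j = ∑ i ∈ range N, ∑ t ∈ range m, f (i * m + t) := by
  induction N with
  | zero => simp
  | succ N ih => rw [Nat.succ_mul, sum_range_add, ih, sum_range_succ]

lemma aperCorr_eq_sum_range (a : ℕ → ℤ) (n k : ℕ) :
    aperCorr a n k = ∑ i ∈ range (n - k), a (i + 1) * a (i + 1 + k) := by
  rw [aperCorr, ← Ico_add_one_right_eq_Icc, sum_Ico_eq_sum_range, Nat.add_sub_cancel]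
  simp only [add_comm 1]

section Repetition

variable {a b : ℕ → ℤ} {n m k s i : ℕ}
  (hb : ∀ i t, i < n → t < m → b (i * m + t + 1) = a (i + 1))
include hb

lemma mul_shift_eq_of_add_lt {t : ℕ} (hik : i + k < n) (hts : t + s < m) :
    b (i * m + t + 1) * b (i * m + t + 1 + (k * m + s)) = a (i + 1) * a (i + 1 + k) := by
  rw [show i * m + t + 1 + (k * m + s) = (i + k) * m + (t + s) + 1 by ring,
    hb i t (by omega) (by omega), hb (i + k) (t + s) hik hts, add_right_comm]

lemma mul_shift_eq_of_le_add {u : ℕ} (hik : i + k + 1 < n) (hu : u < s) (hs : s ≤ m) :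
    b (i * m + (m - s + u) + 1) * b (i * m + (m - s + u) + 1 + (k * m + s))
      = a (i + 1) * a (i + 1 + (k + 1)) := by
  have hidx : i * m + (m - s + u) + 1 + (k * m + s) = (i + k + 1) * m + u + 1 := by
    rw [add_mul, add_mul, one_mul]; omega
  rw [hidx, hb i (m - s + u) (by omega) (by omega), hb (i + k + 1) u hik (by omega),
    show i + 1 + (k + 1) = i + k + 1 + 1 by omega]

lemma sum_block_head_mul_shift (hik : i + k < n) :
    ∑ t ∈ range (m - s), b (i * m + t + 1) * b (i * m + t + 1 + (k * m + s))
      = (m - s : ℕ) * (a (i + 1) * a (i + 1 + k)) := by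
  have hterm : ∀ t ∈ range (m - s), b (i * m + t + 1) * b (i * m + t + 1 + (k * m + s))
      = a (i + 1) * a (i + 1 + k) := fun t ht =>
    mul_shift_eq_of_add_lt hb hik (by rw [mem_range] at ht; omega)
  rw [sum_congr rfl hterm, sum_const, card_range, nsmul_eq_mul]

lemma sum_block_mul_shift (hik : i + k + 1 < n) (hs : s ≤ m) :
    ∑ t ∈ range m, b (i * m + t + 1) * b (i * m + t + 1 + (k * m + s))
      = (m - s : ℕ) * (a (i + 1) * a (i + 1 + k)) + s * (a (i + 1) * a (i + 1 + (k + 1))) := by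
  have hterm : ∀ u ∈ range s,
      b (i * m + (m - s + u) + 1) * b (i * m + (m - s + u) + 1 + (k * m + s))
        = a (i + 1) * a (i + 1 + (k + 1)) := fun u hu =>
    mul_shift_eq_of_le_add hb hik (mem_range.mp hu) hs
  rw [← Nat.sub_add_cancel hs, sum_range_add, Nat.sub_add_cancel hs,
    sum_block_head_mul_shift hb (by omega), sum_congr rfl hterm, sum_const, card_range,
    nsmul_eq_mul]

end Repetition

theorem stmt_9_general (n m : ℕ) (a b : ℕ → ℤ)
    (hb : ∀ i t, 1 ≤ i → i ≤ n → 1 ≤ t → t ≤ m → b ((i - 1) * m + t) = a i)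
    (k s : ℕ) (hk : k < n) (hs : s < m) :
    aperCorr b (n * m) (k * m + s)
      = ((m : ℤ) - s) * aperCorr a n k + (s : ℤ) * aperCorr a n (k + 1) := by
  have hb' : ∀ i t, i < n → t < m → b (i * m + t + 1) = a (i + 1) := fun i t hi ht => by
    simpa [add_assoc] using hb (i + 1) (t + 1) (by omega) hi (by omega) ht
  obtain ⟨N, rfl⟩ : ∃ N, n = k + N + 1 := ⟨n - k - 1, by omega⟩
  have hlen : (k + N + 1) * m - (k * m + s) = N * m + (m - s) := by
    rw [add_mul, add_mul, one_mul]; omega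
  rw [aperCorr_eq_sum_range, aperCorr_eq_sum_range, aperCorr_eq_sum_range, hlen, sum_range_add,
    sum_range_mul_eq_sum_sum,
    sum_congr rfl fun i hi => sum_block_mul_shift hb' (by have := mem_range.mp hi; omega) hs.le,
    sum_block_head_mul_shift hb' (by omega), show k + N + 1 - k = N + 1 by omega,
    show k + N + 1 - (k + 1) = N by omega, sum_range_succ, sum_add_distrib, ← mul_sum,
    ← mul_sum, Nat.cast_sub hs.le]
  ring

theorem stmt_9 (n m : ℕ) (hm : 1 < m) (a b : ℕ → ℤ)
    (hbin : ∀ i, 1 ≤ i → i ≤ n → a i = 1 ∨ a i = -1)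
    (hb : ∀ i t, 1 ≤ i → i ≤ n → 1 ≤ t → t ≤ m → b ((i - 1) * m + t) = a i)
    (k s : ℕ) (hk : k < n) (hs : s < m) :
    aperCorr b (n * m) (k * m + s)
      = ((m : ℤ) - s) * aperCorr a n k + (s : ℤ) * aperCorr a n (k + 1) :=
  stmt_9_general n m a b hb k s hk hs
end

section
/- Let a be a binary sequence of length n which is not constant and satisfies a_1 ≠ a_n. Then for every k with 1 ≤ k ≤ n−1, 2·R̃_k(a) = R_k(a) + R_{n−k}(a). -/
/-- The length of the p-substring `r(i,j)` of a run length encoding with `γ` runs. -/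
def plen (γ i j : ℕ) : ℕ := if i < j then j - i else γ + j - i

/-- The sum of the entries of the p-substring `r(i,j)`. -/
def psum (r : ℕ → ℕ) (γ i j : ℕ) : ℕ :=
  if i < j then ∑ u ∈ Finset.Icc i (j - 1), r u
  else (∑ u ∈ Finset.Icc i γ, r u) + ∑ u ∈ Finset.Icc 1 (j - 1), r u

/-- The `k`-th component of the periodic run vector: the sum of `(-1)^{|u|}` over
all p-substrings `u = r(i,j)` (`1 ≤ i,j ≤ γ`, `i ≠ j`) of `r` with sum `k`. -/
def runVecPer (r : ℕ → ℕ) (γ k : ℕ) : ℤ :=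
  ∑ p ∈ (Finset.Icc 1 γ ×ˢ Finset.Icc 1 γ).filter
      (fun p => p.1 ≠ p.2 ∧ psum r γ p.1 p.2 = k),
    (-1 : ℤ) ^ plen γ p.1 p.2

/-!
Index run blocks by pairs `s < t` of run indices: `a(I s, I t)` has length `I t - I s`, and
since consecutive runs have opposite signs, it contributes `(-1)^(s+t)` to `R_{I t - I s}`,
twice that if it is inner. A p-substring `r(i, j)` is the block `a(I i, I j)` when `i < j`, and
when `j < i` it wraps around and has sum `n - (I i - I j)`. Hence `R̃_k = A_k + A_{n-k}`,
where `A_m` is the signed count of blocks of length `m` not ending at `n + 1`, while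
`R_m = 2 A_m - L_m + E_m` with `L_m`, `E_m` the signed counts of blocks of length `m` starting
at `1`, resp. ending at `n + 1`. As `γ` is even, `a(1, I t)` and `a(I t, n + 1)` carry the same
sign, so `L_m = E_{n-m}` and the corrections cancel in `R_k + R_{n-k}`.
-/

open Finset

/-- `(s, t)` indexes the run block `a(I s, I t)`, which has length `m`. -/
def runBlocks (I : ℕ → ℕ) (γ m : ℕ) : Finset (ℕ × ℕ) :=
  (Icc 1 (γ + 1) ×ˢ Icc 1 (γ + 1)).filter fun p => p.1 < p.2 ∧ I p.2 = I p.1 + m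

def pSubstrings (r : ℕ → ℕ) (γ k : ℕ) : Finset (ℕ × ℕ) :=
  (Icc 1 γ ×ˢ Icc 1 γ).filter fun p => p.1 ≠ p.2 ∧ psum r γ p.1 p.2 = k

lemma runVecPer_eq_sum_pSubstrings (r : ℕ → ℕ) (γ k : ℕ) :
    runVecPer r γ k = ∑ p ∈ pSubstrings r γ k, (-1 : ℤ) ^ plen γ p.1 p.2 :=
  rfl

def signSum (s : Finset (ℕ × ℕ)) : ℤ :=
  ∑ p ∈ s, (-1 : ℤ) ^ (p.1 + p.2)

lemma neg_one_pow_plen {γ i j : ℕ} (hγ : Even γ) (hi : i ≤ γ) :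
    (-1 : ℤ) ^ plen γ i j = (-1) ^ (i + j) := by
  obtain ⟨g, rfl⟩ := hγ
  rw [plen]
  split_ifs <;> exact neg_one_pow_congr (by simp only [Nat.even_iff]; omega)

section RunStarts

variable {I : ℕ → ℕ} {n γ : ℕ}

lemma strictMonoOn_of_runStart_lt_succ (hImono : ∀ j, 1 ≤ j → j ≤ γ → I j < I (j + 1)) :
    StrictMonoOn I (Set.Icc 1 (γ + 1)) :=
  strictMonoOn_of_lt_add_one Set.ordConnected_Icc fun j _ hj hj1 =>
    hImono j hj.1 (by simp only [Set.mem_Icc] at hj1; omega)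

lemma exists_runStart_le_lt {p : ℕ} (h1 : I 1 ≤ p) (hγ : p < I (γ + 1)) :
    ∃ j, 1 ≤ j ∧ j ≤ γ ∧ I j ≤ p ∧ p < I (j + 1) := by
  induction γ with
  | zero => rw [zero_add] at hγ; omega
  | succ γ ih =>
    by_cases hp : p < I (γ + 1)
    · obtain ⟨j, hj⟩ := ih hp
      exact ⟨j, by omega⟩
    · exact ⟨γ + 1, by omega, le_rfl, by omega, hγ⟩

lemma one_le_runStart (hmono : StrictMonoOn I (Set.Icc 1 (γ + 1))) (hI1 : I 1 = 1) {s : ℕ}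
    (hs : 1 ≤ s) (hsγ : s ≤ γ + 1) : 1 ≤ I s :=
  hI1 ▸ hmono.monotoneOn ⟨le_rfl, by omega⟩ ⟨hs, hsγ⟩ hs

lemma runStart_le (hmono : StrictMonoOn I (Set.Icc 1 (γ + 1))) (hIlast : I (γ + 1) = n + 1)
    {s : ℕ} (hs : 1 ≤ s) (hsγ : s ≤ γ) : I s ≤ n := by
  have := hmono ⟨hs, by omega⟩ ⟨by omega, le_rfl⟩ (by omega : s < γ + 1)
  omega

lemma sum_weight_runBlocks (hI1 : I 1 = 1) (hIlast : I (γ + 1) = n + 1) {m : ℕ} (hmn : m ≠ n) :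
    ∑ p ∈ runBlocks I γ m, (if 1 < p.1 ∧ p.2 ≤ γ then 2 else 1) * (-1 : ℤ) ^ (p.1 + p.2)
      = 2 * signSum ((runBlocks I γ m).filter (·.2 ≤ γ))
        - signSum ((runBlocks I γ m).filter (·.1 = 1))
        + signSum ((runBlocks I γ m).filter (·.2 = γ + 1)) := by
  simp only [signSum, sum_filter, mul_sum, ← sum_sub_distrib, ← sum_add_distrib]
  refine sum_congr rfl fun p hp => ?_
  simp only [runBlocks, mem_filter, mem_product, mem_Icc] at hp
  have hnot_whole : ¬(p.1 = 1 ∧ p.2 = γ + 1) := by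
    rintro ⟨h1, h2⟩
    have := hp.2.2
    rw [h1, h2, hI1, hIlast] at this
    omega
  split_ifs <;> first | ring1 | omega

lemma signSum_runBlocks_fst_eq_one (hI1 : I 1 = 1) (hIlast : I (γ + 1) = n + 1) (hγ : Even γ)
    {m : ℕ} (hm : 0 < m) (hmn : m < n) :
    signSum ((runBlocks I γ m).filter (·.1 = 1))
      = signSum ((runBlocks I γ (n - m)).filter (·.2 = γ + 1)) := by
  refine sum_nbij' (fun p => (p.2, γ + 1)) (fun p => (1, p.1)) ?_ ?_ ?_ ?_ ?_
  · rintro ⟨s, t⟩ hp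
    simp only [runBlocks, mem_filter, mem_product, mem_Icc] at hp ⊢
    obtain ⟨⟨⟨-, ht, htγ⟩, -, hIt⟩, rfl⟩ := hp
    have ht_ne : t ≠ γ + 1 := by
      rintro rfl
      omega
    exact ⟨⟨⟨⟨ht, htγ⟩, by omega, le_rfl⟩, by omega, by omega⟩, trivial⟩
  · rintro ⟨s, t⟩ hp
    simp only [runBlocks, mem_filter, mem_product, mem_Icc] at hp ⊢
    obtain ⟨⟨⟨⟨hs, -⟩, -⟩, hst, hIs⟩, rfl⟩ := hp
    have hs_ne : s ≠ 1 := by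
      rintro rfl
      omega
    exact ⟨⟨⟨⟨le_rfl, by omega⟩, hs, by omega⟩, by omega, by omega⟩, trivial⟩
  · rintro ⟨s, t⟩ hp
    obtain ⟨-, rfl⟩ := mem_filter.mp hp
    rfl
  · rintro ⟨s, t⟩ hp
    obtain ⟨-, rfl⟩ := mem_filter.mp hp
    rfl
  · rintro ⟨s, t⟩ hp
    obtain ⟨-, rfl⟩ := mem_filter.mp hp
    obtain ⟨g, rfl⟩ := hγ
    exact neg_one_pow_congr (by simp only [Nat.even_iff]; omega)

end RunStarts

section RunLengths

variable {I : ℕ → ℕ} {n γ : ℕ} {r : ℕ → ℕ} (hImono : ∀ j, 1 ≤ j → j ≤ γ → I j < I (j + 1))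
  (hr : ∀ j, 1 ≤ j → j ≤ γ → r j = I (j + 1) - I j)
include hImono hr

lemma sum_runLength_eq {s t : ℕ} (hs : 1 ≤ s) (hst : s ≤ t) (ht : t ≤ γ + 1) :
    ∑ u ∈ Icc s (t - 1), r u = I t - I s := by
  have hIco : Icc s (t - 1) = Ico s t := by
    refine Icc_sub_one_right_eq_Ico_of_not_isMin (not_isMin_iff_ne_bot.mpr ?_) s
    rw [Nat.bot_eq_zero]
    omega
  have hcast : ((∑ u ∈ Icc s (t - 1), r u : ℕ) : ℤ) = I t - I s := by
    rw [Nat.cast_sum, hIco, ← sum_Ico_sub (fun u => (I u : ℤ)) hst]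
    refine sum_congr rfl fun u hu => ?_
    obtain ⟨hsu, hut⟩ := mem_Ico.mp hu
    have := hImono u (by omega) (by omega)
    rw [hr u (by omega) (by omega)]
    omega
  omega

lemma psum_of_lt {i j : ℕ} (hi : 1 ≤ i) (hij : i < j) (hj : j ≤ γ) :
    psum r γ i j = I j - I i := by
  rw [psum, if_pos hij]
  exact sum_runLength_eq hImono hr hi hij.le (by omega)

lemma psum_of_gt (hI1 : I 1 = 1) (hIlast : I (γ + 1) = n + 1) {i j : ℕ} (hj : 1 ≤ j)
    (hji : j < i) (hi : i ≤ γ) :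
    psum r γ i j = n + 1 - I i + (I j - 1) := by
  have hfirst := sum_runLength_eq hImono hr (by omega : 1 ≤ i) (by omega) le_rfl
  have hlast := sum_runLength_eq hImono hr le_rfl hj (by omega)
  rw [Nat.add_sub_cancel, hIlast] at hfirst
  rw [hI1] at hlast
  rw [psum, if_neg (by omega), hfirst, hlast]

lemma filter_lt_pSubstrings (k : ℕ) :
    (pSubstrings r γ k).filter (fun p => p.1 < p.2) = (runBlocks I γ k).filter (·.2 ≤ γ) := by
  have hmono := strictMonoOn_of_runStart_lt_succ hImono
  ext ⟨i, j⟩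
  simp only [pSubstrings, runBlocks, mem_filter, mem_product, mem_Icc]
  constructor
  · rintro ⟨⟨⟨⟨hi, hiγ⟩, hj, hjγ⟩, -, hk⟩, hij⟩
    rw [psum_of_lt hImono hr hi hij hjγ] at hk
    have := hmono ⟨hi, by omega⟩ ⟨hj, by omega⟩ hij
    exact ⟨⟨⟨⟨hi, by omega⟩, hj, by omega⟩, hij, by omega⟩, hjγ⟩
  · rintro ⟨⟨⟨⟨hi, -⟩, hj, -⟩, hij, hk⟩, hjγ⟩
    refine ⟨⟨⟨⟨hi, by omega⟩, hj, hjγ⟩, hij.ne, ?_⟩, hij⟩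
    rw [psum_of_lt hImono hr hi hij hjγ]
    omega

lemma filter_not_lt_pSubstrings (hI1 : I 1 = 1) (hIlast : I (γ + 1) = n + 1) (k : ℕ) :
    (pSubstrings r γ k).filter (fun p => ¬p.1 < p.2)
      = ((runBlocks I γ (n - k)).filter (·.2 ≤ γ)).map (Equiv.prodComm ℕ ℕ).toEmbedding := by
  have hmono := strictMonoOn_of_runStart_lt_succ hImono
  ext ⟨i, j⟩
  simp only [mem_map_equiv, Equiv.prodComm_symm, Equiv.prodComm_apply, Prod.swap_prod_mk,
    pSubstrings, runBlocks, mem_filter, mem_product, mem_Icc]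
  constructor
  · rintro ⟨⟨⟨⟨hi, hiγ⟩, hj, -⟩, hne, hk⟩, hij⟩
    rw [psum_of_gt hImono hr hI1 hIlast hj (by omega) hiγ] at hk
    have := hmono ⟨hj, by omega⟩ ⟨hi, by omega⟩ (by omega : j < i)
    have := one_le_runStart hmono hI1 hj (by omega)
    have := runStart_le hmono hIlast hi hiγ
    exact ⟨⟨⟨⟨hj, by omega⟩, hi, by omega⟩, by omega, by omega⟩, hiγ⟩
  · rintro ⟨⟨⟨⟨hj, -⟩, hi, -⟩, hji, hk⟩, hiγ⟩
    refine ⟨⟨⟨⟨hi, hiγ⟩, hj, by omega⟩, by omega, ?_⟩, by omega⟩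
    rw [psum_of_gt hImono hr hI1 hIlast hj hji hiγ]
    have := hmono ⟨hj, by omega⟩ ⟨hi, by omega⟩ hji
    have := one_le_runStart hmono hI1 hj (by omega)
    have := runStart_le hmono hIlast hi hiγ
    omega

lemma runVecPer_eq_signSum (hI1 : I 1 = 1) (hIlast : I (γ + 1) = n + 1) (hγ : Even γ)
    (k : ℕ) :
    runVecPer r γ k = signSum ((runBlocks I γ k).filter (·.2 ≤ γ))
      + signSum ((runBlocks I γ (n - k)).filter (·.2 ≤ γ)) := by
  rw [runVecPer_eq_sum_pSubstrings, ← sum_filter_add_sum_filter_not _ (fun p => p.1 < p.2),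
    filter_lt_pSubstrings hImono hr, filter_not_lt_pSubstrings hImono hr hI1 hIlast, sum_map]
  congr 1 <;> refine sum_congr rfl fun p hp => ?_ <;> simp only [runBlocks, mem_filter] at hp
  · exact neg_one_pow_plen hγ (by omega)
  · rw [Equiv.coe_toEmbedding, Equiv.prodComm_apply, Prod.fst_swap, Prod.snd_swap,
      neg_one_pow_plen hγ hp.2, add_comm]

end RunLengths

structure IsRunStarts (a : ℕ → ℤ) (n γ : ℕ) (I : ℕ → ℕ) : Prop where
  first : I 1 = 1
  last : I (γ + 1) = n + 1
  lt_succ : ∀ j, 1 ≤ j → j ≤ γ → I j < I (j + 1)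
  change : ∀ j, 2 ≤ j → j ≤ γ → a (I j - 1) ≠ a (I j)
  const : ∀ j, 1 ≤ j → j ≤ γ → ∀ p, I j ≤ p → p < I (j + 1) → a p = a (I j)

namespace IsRunStarts

variable {a : ℕ → ℤ} {n γ : ℕ} {I : ℕ → ℕ} (hI : IsRunStarts a n γ I)
include hI

lemma strictMonoOn : StrictMonoOn I (Set.Icc 1 (γ + 1)) :=
  strictMonoOn_of_runStart_lt_succ hI.lt_succ

lemma apply_runEnd {j : ℕ} (hj : 1 ≤ j) (hjγ : j ≤ γ) : a (I (j + 1) - 1) = a (I j) := by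
  have := hI.lt_succ j hj hjγ
  exact hI.const j hj hjγ _ (by omega) (by omega)

lemma exists_runStart_eq {p : ℕ} (hp : 1 ≤ p) (hpn : p ≤ n + 1) (hb : a (p - 1) ≠ a p) :
    ∃ j, 1 ≤ j ∧ j ≤ γ + 1 ∧ I j = p := by
  rcases eq_or_lt_of_le hpn with rfl | hpn
  · exact ⟨γ + 1, by omega, le_rfl, hI.last⟩
  obtain ⟨j, hj, hjγ, hjp, hpj⟩ := exists_runStart_le_lt (I := I) (γ := γ) (p := p)
    (by rw [hI.first]; omega) (by rw [hI.last]; omega)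
  refine ⟨j, hj, by omega, ?_⟩
  by_contra hne
  exact hb ((hI.const j hj hjγ (p - 1) (by omega) (by omega)).trans
    (hI.const j hj hjγ p hjp hpj).symm)

variable (hbin : ∀ i, 1 ≤ i → i ≤ n → a i = 1 ∨ a i = -1)
include hbin

lemma apply_runStart {j : ℕ} (hj : 1 ≤ j) (hjγ : j ≤ γ) : a (I j) = (-1) ^ (j + 1) * a 1 := by
  induction j, hj using Nat.le_induction with
  | base => rw [hI.first]; ring
  | succ j hj ih =>
    have hne := hI.change (j + 1) (by omega) hjγ
    rw [hI.apply_runEnd hj (by omega)] at hne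
    have := hbin (I j) (one_le_runStart hI.strictMonoOn hI.first hj (by omega))
      (runStart_le hI.strictMonoOn hI.last hj (by omega))
    have := hbin (I (j + 1)) (one_le_runStart hI.strictMonoOn hI.first (by omega) (by omega))
      (runStart_le hI.strictMonoOn hI.last (by omega) hjγ)
    rw [show a (I (j + 1)) = -a (I j) by omega, ih (by omega)]
    ring

lemma apply_runStart_mul_apply_runEnd (hn : 1 ≤ n) {s t : ℕ} (hs : 1 ≤ s) (hst : s < t)
    (ht : t ≤ γ + 1) : a (I s) * a (I t - 1) = -(-1) ^ (s + t) := by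
  obtain ⟨u, rfl⟩ : ∃ u, t = u + 1 := ⟨t - 1, by omega⟩
  have ha1 : a 1 * a 1 = 1 := by rcases hbin 1 le_rfl hn with h | h <;> rw [h] <;> norm_num
  rw [hI.apply_runEnd (by omega) (by omega), hI.apply_runStart hbin hs (by omega),
    hI.apply_runStart hbin (by omega) (by omega)]
  linear_combination (-1 : ℤ) ^ (s + u) * ha1

lemma even_of_apply_one_ne (hn : 1 ≤ n) (h1n : a 1 ≠ a n) : Even γ := by
  have hγ : γ ≠ 0 := by
    rintro rfl
    have := hI.last
    rw [zero_add, hI.first] at this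
    omega
  have han : a n = (-1) ^ (γ + 1) * a 1 := by
    rw [← hI.apply_runStart hbin (j := γ) (by omega) le_rfl,
      ← hI.apply_runEnd (by omega) le_rfl, hI.last, Nat.add_sub_cancel]
  by_contra hodd
  rw [Nat.not_even_iff_odd] at hodd
  rw [hodd.add_one.neg_one_pow, one_mul] at han
  exact h1n han.symm

lemma apply_runStart_sub_one_ne (hn : 1 ≤ n) (h0 : a 0 = 0) (htop : a (n + 1) = 0) {j : ℕ}
    (hj : 1 ≤ j) (hjγ : j ≤ γ + 1) : a (I j - 1) ≠ a (I j) := by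
  rcases (show j = 1 ∨ 2 ≤ j ∧ j ≤ γ ∨ j = γ + 1 by omega) with rfl | hj' | rfl
  · have := hbin 1 le_rfl hn
    rw [hI.first, Nat.sub_self, h0]
    omega
  · exact hI.change j hj'.1 hj'.2
  · have := hbin n hn le_rfl
    rw [hI.last, Nat.add_sub_cancel, htop]
    omega

lemma runBlock_weight_eq (hn : 1 ≤ n) {s t : ℕ} (hs : 1 ≤ s) (hst : s < t) (ht : t ≤ γ + 1) :
    (if 1 < I s ∧ I t < n + 1 then 2 else 1) * (a (I s) * a (I t - 1))
      = -((if 1 < s ∧ t ≤ γ then 2 else 1) * (-1 : ℤ) ^ (s + t)) := by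
  have hmono := hI.strictMonoOn
  have h1 : 1 < I s ↔ 1 < s := by
    simpa only [hI.first] using hmono.lt_iff_lt ⟨le_rfl, (by omega : 1 ≤ γ + 1)⟩ ⟨hs, by omega⟩
  have h2 : I t < n + 1 ↔ t < γ + 1 := by
    simpa only [hI.last] using hmono.lt_iff_lt ⟨by omega, ht⟩ ⟨(by omega : 1 ≤ γ + 1), le_rfl⟩
  rw [hI.apply_runStart_mul_apply_runEnd hbin hn hs hst ht]
  simp only [h1, h2, Nat.lt_succ_iff]
  ring

lemma runVec_eq_sum_runBlocks (hn : 1 ≤ n) (h0 : a 0 = 0) (htop : a (n + 1) = 0) {m : ℕ}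
    (hm : 0 < m) :
    runVec a n m = ∑ p ∈ runBlocks I γ m,
      (if 1 < p.1 ∧ p.2 ≤ γ then 2 else 1) * (-1 : ℤ) ^ (p.1 + p.2) := by
  have hmono := hI.strictMonoOn
  rw [runVec, ← sum_filter, ← sum_neg_distrib]
  symm
  refine sum_nbij (fun p => I p.1) ?_ ?_ ?_ ?_
  · rintro ⟨s, t⟩ hp
    simp only [runBlocks, mem_filter, mem_product, mem_Icc] at hp ⊢
    obtain ⟨⟨⟨hs, hsγ⟩, ht, htγ⟩, -, hIt⟩ := hp
    have := hmono.monotoneOn ⟨ht, htγ⟩ ⟨by omega, le_rfl⟩ htγ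
    rw [hI.last] at this
    rw [← hIt]
    exact ⟨⟨one_le_runStart hmono hI.first hs hsγ, by omega⟩,
      hI.apply_runStart_sub_one_ne hbin hn h0 htop hs hsγ,
      hI.apply_runStart_sub_one_ne hbin hn h0 htop ht htγ⟩
  · rintro ⟨s, t⟩ hp ⟨s', t'⟩ hp' (h : I s = I s')
    simp only [coe_filter, runBlocks, mem_product, mem_Icc, Set.mem_ofPred_eq] at hp hp'
    obtain ⟨⟨⟨hs, hsγ⟩, ht, htγ⟩, -, hIt⟩ := hp
    obtain ⟨⟨⟨hs', hsγ'⟩, ht', htγ'⟩, -, hIt'⟩ := hp'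
    have hss' : s = s' := hmono.injOn ⟨hs, hsγ⟩ ⟨hs', hsγ'⟩ h
    have htt' : t = t' := hmono.injOn ⟨ht, htγ⟩ ⟨ht', htγ'⟩ (by omega)
    rw [hss', htt']
  · intro x hx
    simp only [coe_filter, mem_Icc, Set.mem_ofPred_eq] at hx
    obtain ⟨⟨hx, hxn⟩, hbx, hbxm⟩ := hx
    obtain ⟨s, hs, hsγ, rfl⟩ := hI.exists_runStart_eq hx (by omega) hbx
    obtain ⟨t, ht, htγ, hIt⟩ := hI.exists_runStart_eq (p := I s + m) (by omega) (by omega) hbxm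
    have hst : s < t := (hmono.lt_iff_lt ⟨hs, hsγ⟩ ⟨ht, htγ⟩).mp (by omega)
    exact ⟨(s, t), mem_coe.mpr (mem_filter.mpr
      ⟨mem_product.mpr ⟨mem_Icc.mpr ⟨hs, hsγ⟩, mem_Icc.mpr ⟨ht, htγ⟩⟩, hst, hIt⟩), rfl⟩
  · rintro ⟨s, t⟩ hp
    simp only [runBlocks, mem_filter, mem_product, mem_Icc] at hp
    obtain ⟨⟨⟨hs, -⟩, -, htγ⟩, hst, hIt⟩ := hp
    dsimp only
    rw [← hIt, hI.runBlock_weight_eq hbin hn hs hst htγ, neg_neg]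

end IsRunStarts

theorem stmt_17_general (n γ : ℕ) (a : ℕ → ℤ)
    (hbin : ∀ i, 1 ≤ i → i ≤ n → a i = 1 ∨ a i = -1)
    (h0 : a 0 = 0) (htop : a (n + 1) = 0)
    (h1n : a 1 ≠ a n)
    -- `I j` (for `1 ≤ j ≤ γ+1`) are the starting positions of the runs of `a`:
    (I : ℕ → ℕ) (hI1 : I 1 = 1) (hIlast : I (γ + 1) = n + 1)
    (hImono : ∀ j, 1 ≤ j → j ≤ γ → I j < I (j + 1))
    (hchange : ∀ j, 2 ≤ j → j ≤ γ → a (I j - 1) ≠ a (I j))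
    (hconst : ∀ j, 1 ≤ j → j ≤ γ → ∀ p, I j ≤ p → p < I (j + 1) → a p = a (I j))
    -- the run length encoding `r`:
    (r : ℕ → ℕ) (hr : ∀ j, 1 ≤ j → j ≤ γ → r j = I (j + 1) - I j)
    (k : ℕ) (hk1 : 1 ≤ k) (hk2 : k ≤ n - 1) :
    2 * runVecPer r γ k = runVec a n k + runVec a n (n - k) := by
  have hI : IsRunStarts a n γ I := ⟨hI1, hIlast, hImono, hchange, hconst⟩
  have hn : 1 ≤ n := by omega
  have hγ := hI.even_of_apply_one_ne hbin hn h1n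
  have hrunVec : ∀ m, 0 < m → m < n → runVec a n m =
      2 * signSum ((runBlocks I γ m).filter (·.2 ≤ γ))
        - signSum ((runBlocks I γ m).filter (·.1 = 1))
        + signSum ((runBlocks I γ m).filter (·.2 = γ + 1)) := fun m hm hmn =>
    (hI.runVec_eq_sum_runBlocks hbin hn h0 htop hm).trans
      (sum_weight_runBlocks hI1 hIlast hmn.ne)
  rw [runVecPer_eq_signSum hImono hr hI1 hIlast hγ, hrunVec k (by omega) (by omega),
    hrunVec (n - k) (by omega) (by omega),
    signSum_runBlocks_fst_eq_one hI1 hIlast hγ (m := k) (by omega) (by omega),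
    signSum_runBlocks_fst_eq_one hI1 hIlast hγ (m := n - k) (by omega) (by omega),
    Nat.sub_sub_self (by omega : k ≤ n)]
  ring

theorem stmt_17 (n γ : ℕ) (hn : 1 ≤ n) (a : ℕ → ℤ)
    (hbin : ∀ i, 1 ≤ i → i ≤ n → a i = 1 ∨ a i = -1)
    (h0 : a 0 = 0) (htop : a (n + 1) = 0)
    (hnc : ∃ i j, 1 ≤ i ∧ i ≤ n ∧ 1 ≤ j ∧ j ≤ n ∧ a i ≠ a j)
    (h1n : a 1 ≠ a n)
    -- `I j` (for `1 ≤ j ≤ γ+1`) are the starting positions of the runs of `a`: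
    (I : ℕ → ℕ) (hI1 : I 1 = 1) (hIlast : I (γ + 1) = n + 1)
    (hImono : ∀ j, 1 ≤ j → j ≤ γ → I j < I (j + 1))
    (hchange : ∀ j, 2 ≤ j → j ≤ γ → a (I j - 1) ≠ a (I j))
    (hconst : ∀ j, 1 ≤ j → j ≤ γ → ∀ p, I j ≤ p → p < I (j + 1) → a p = a (I j))
    -- the run length encoding `r`:
    (r : ℕ → ℕ) (hr : ∀ j, 1 ≤ j → j ≤ γ → r j = I (j + 1) - I j)
    (k : ℕ) (hk1 : 1 ≤ k) (hk2 : k ≤ n - 1) :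
    2 * runVecPer r γ k = runVec a n k + runVec a n (n - k) :=
  stmt_17_general n γ a hbin h0 htop h1n I hI1 hIlast hImono hchange hconst r hr k hk1 hk2
end
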